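/- Let q₁, q₂ ∈ ℂ* be generic, i.e. q₁^a q₂^b ≠ 1 for all pairs of nonnegative integers (a,b) ≠ (0,0). Then for every n ≥ 1 the shuffle algebra is generated in degree one: every element of S_n, i.e. every quotient f/Δ_n with f a symmetric Laurent polynomial in z₁,…,z_n, is a ℂ-linear combination of iterated shuffle products f₁ * f₂ * ⋯ * f_n with each f_i a one-variable Laurent polynomial. -/

import Mathlib

open MvPolynomial

noncomputable section ShuffleAlgebra

variable (K : Type) [Field K]

/-- The field of rational functions in countably many variables `z 0, z 1, …` over `K`. -/
abbrev RF := FractionRing (MvPolynomial ℕ K)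

/-- The variable `z i` as a rational function. -/
def Z (i : ℕ) : RF K := algebraMap (MvPolynomial ℕ K) (RF K) (X i)

/-- A constant, viewed as a rational function. -/
def cst (q : K) : RF K := algebraMap (MvPolynomial ℕ K) (RF K) (C q)

/-- Substitution `z i ↦ z (f i)` for an injective `f`, as a ring homomorphism of
rational functions. -/
def ren (f : ℕ → ℕ) (hf : Function.Injective f) : RF K →+* RF K :=
  IsFractionRing.lift (g := (algebraMap (MvPolynomial ℕ K) (RF K)).comp (rename f).toRingHom)
    ((IsFractionRing.injective (MvPolynomial ℕ K) (RF K)).comp (rename_injective f hf))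

/-- A permutation of `Fin k` extended (by the identity) to a permutation of `ℕ`. -/
def natPerm (k : ℕ) (σ : Equiv.Perm (Fin k)) : Equiv.Perm ℕ :=
  σ.extendDomain Fin.equivSubtype

/-- `Alt_{S_k}(F) = (1/k!) ∑_{σ ∈ S_k} sgn(σ) F(z_{σ(1)},…,z_{σ(k)})`. -/
def Alt (k : ℕ) (F : RF K) : RF K :=
  (k.factorial : RF K)⁻¹ *
    ∑ σ : Equiv.Perm (Fin k),
      ((Equiv.Perm.sign σ : ℤ) : RF K) * ren K (natPerm k σ) (natPerm k σ).injective F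

variable (q₁ q₂ : K)

/-- `μ(x,y) = (x − q₁y)(x − q₂y)/(x − y)²`. -/
def mu (x y : RF K) : RF K := (x - cst K q₁ * y) * (x - cst K q₂ * y) / (x - y) ^ 2

/-- The shuffle product of `F` (a function of `z 0, …, z (n-1)`) and `G`
(a function of `z 0, …, z (m-1)`). -/
def shuffle (n m : ℕ) (F G : RF K) : RF K :=
  Alt K (n + m) (F * ren K (· + n) (add_left_injective n) G *
    ∏ i : Fin n, ∏ j : Fin m, mu K q₁ q₂ (Z K i.val) (Z K (n + j.val)))

/-- The Vandermonde determinant `Δ_n = ∏_{i<j} (z i − z j)`. -/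
def vand (n : ℕ) : RF K :=
  algebraMap (MvPolynomial ℕ K) (RF K)
    (∏ j ∈ Finset.range n, ∏ i ∈ Finset.range j, (X i - X j))

/-- `f` is a symmetric Laurent polynomial in the variables `z 0, …, z (n-1)`. -/
def IsSymLaurent (n : ℕ) (f : RF K) : Prop :=
  (∃ (p : MvPolynomial ℕ K) (N : ℕ), (↑p.vars : Set ℕ) ⊆ Set.Iio n ∧
      f * algebraMap (MvPolynomial ℕ K) (RF K) ((∏ i ∈ Finset.range n, X i) ^ N)
        = algebraMap (MvPolynomial ℕ K) (RF K) p) ∧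
  ∀ σ : Equiv.Perm (Fin n), ren K (natPerm n σ) (natPerm n σ).injective f = f

/-- The `n`-th graded component `S_n` of the shuffle algebra: quotients `f/Δ_n` with
`f` a symmetric Laurent polynomial in `z 0, …, z (n-1)`. -/
def Sgr (n : ℕ) : Set (RF K) :=
  {F | ∃ f : RF K, IsSymLaurent K n f ∧ F = f / vand K n}

/-- Iterated (left-to-right) shuffle product of a list of elements of `S₁`. -/
def iterSh (l : List (RF K)) : RF K :=
  (l.foldl (fun acc f => (shuffle K q₁ q₂ acc.2 1 acc.1 f, acc.2 + 1)) ((1 : RF K), 0)).1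

/-- The iterated shuffle product `z^{i₁} * ⋯ * z^{i_n}`. -/
def zpows (l : List ℤ) : RF K := iterSh K q₁ q₂ (l.map fun i => Z K 0 ^ i)

/-- `F` is defined at the point `α` and its value there is `v`. -/
def EvalAt (α : ℕ → K) (F : RF K) (v : K) : Prop :=
  ∃ p q : MvPolynomial ℕ K, eval α q ≠ 0 ∧
    F * algebraMap (MvPolynomial ℕ K) (RF K) q = algebraMap (MvPolynomial ℕ K) (RF K) p ∧
    eval α p = v * eval α q

end ShuffleAlgebra

/-!
The iterated shuffle product of monomials is
`z^{e_1} * ⋯ * z^{e_n} = Alt(z^e · ∏_{i<j} μ(z_i, z_j))`, and `∏_{i<j} μ(z_i, z_j) = k/Δ_n²` with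
`k = ∏_{i<j} (z_i - q₁z_j)(z_i - q₂z_j)`. So these products span every `Alt(P · σ(k))/Δ_n²` with
`P` a Laurent polynomial and `σ ∈ S_n`. For generic `q₁, q₂` the `σ(k)` have no common zero on the
torus: `x ≺ y :⟺ x = q₁^a q₂^b y, (a,b) ≠ (0,0)` is a strict order on `ℂ^*`, and listing the
coordinates of a point in an order compatible with `≺` makes the corresponding `σ(k)` nonzero there.
By the Nullstellensatz a power of `z_1 ⋯ z_n` lies in the ideal generated by the `σ(k)`, so the
span contains `Alt(P)/Δ_n²` for every Laurent polynomial `P`. Finally `f/Δ_n = Alt(fΔ_n)/Δ_n²`,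
as `fΔ_n` is antisymmetric.
-/

open Equiv

section Renaming

variable {K : Type} [Field K]

theorem ren_algebraMap (f : ℕ → ℕ) {hf : Function.Injective f} (p : MvPolynomial ℕ K) :
    ren K f hf (algebraMap (MvPolynomial ℕ K) (RF K) p)
      = algebraMap (MvPolynomial ℕ K) (RF K) (rename f p) :=
  IsFractionRing.lift_algebraMap _ _

theorem ren_ext {f g : ℕ → ℕ} {hf : Function.Injective f} {hg : Function.Injective g}
    (h : ∀ i, f i = g i) : ren K f hf = ren K g hg := by
  obtain rfl : f = g := funext h
  rfl

theorem ren_ren (f g : ℕ → ℕ) {hf : Function.Injective f} {hg : Function.Injective g}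
    (x : RF K) : ren K f hf (ren K g hg x) = ren K (f ∘ g) (hf.comp hg) x := by
  refine DFunLike.congr_fun (IsLocalization.ringHom_ext (nonZeroDivisors (MvPolynomial ℕ K))
    (RingHom.ext fun p => ?_) : (ren K f hf).comp (ren K g hg) = _) x
  simp [ren_algebraMap, rename_rename]

theorem ren_eq_self {f : ℕ → ℕ} {hf : Function.Injective f} (h : ∀ i, f i = i) (x : RF K) :
    ren K f hf x = x := by
  refine DFunLike.congr_fun (IsLocalization.ringHom_ext (nonZeroDivisors (MvPolynomial ℕ K))
    (RingHom.ext fun p => ?_) : ren K f hf = RingHom.id _) x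
  simp [ren_algebraMap, (funext h : f = id), rename_id]

theorem ren_Z (f : ℕ → ℕ) {hf : Function.Injective f} (i : ℕ) :
    ren K f hf (Z K i) = Z K (f i) := by
  rw [Z, ren_algebraMap, rename_X, Z]

theorem ren_cst (f : ℕ → ℕ) {hf : Function.Injective f} (c : K) :
    ren K f hf (cst K c) = cst K c := by
  rw [cst, ren_algebraMap, rename_C]

theorem ren_mu (q₁ q₂ : K) (f : ℕ → ℕ) {hf : Function.Injective f} (i j : ℕ) :
    ren K f hf (mu K q₁ q₂ (Z K i) (Z K j)) = mu K q₁ q₂ (Z K (f i)) (Z K (f j)) := by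
  simp only [mu, map_div₀, map_mul, map_sub, map_pow, ren_cst, ren_Z]

theorem Z_ne_zero (i : ℕ) : Z K i ≠ 0 :=
  (IsFractionRing.to_map_eq_zero_iff).not.2 (X_ne_zero i)

end Renaming

section NatPerm

theorem natPerm_mul (k : ℕ) (σ τ : Perm (Fin k)) :
    natPerm k (σ * τ) = natPerm k σ * natPerm k τ :=
  (Perm.extendDomain_mul _ σ τ).symm

theorem natPerm_one (k : ℕ) : natPerm k 1 = 1 :=
  Perm.extendDomain_one _

theorem natPerm_apply_val {k : ℕ} (σ : Perm (Fin k)) (i : Fin k) : natPerm k σ i = σ i :=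
  Perm.extendDomain_apply_image σ Fin.equivSubtype i

theorem natPerm_apply_of_le {k : ℕ} (σ : Perm (Fin k)) {i : ℕ} (hi : k ≤ i) :
    natPerm k σ i = i :=
  Perm.extendDomain_apply_not_subtype _ _ (not_lt.2 hi)

theorem exists_natPerm_eq_of_le {n N : ℕ} (h : n ≤ N) (σ : Perm (Fin n)) :
    ∃ τ : Perm (Fin N), natPerm N τ = natPerm n σ ∧ Perm.sign τ = Perm.sign σ := by
  let e : Fin n ≃ {j : Fin N // (j : ℕ) < n} :=
    { toFun := fun i => ⟨Fin.castLE h i, i.2⟩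
      invFun := fun j => ⟨j.1, j.2⟩
      left_inv := fun _ => rfl
      right_inv := fun _ => rfl }
  refine ⟨σ.extendDomain e, Equiv.ext fun i => ?_, Perm.sign_extendDomain σ e⟩
  rcases lt_or_ge i n with hin | hni
  · have := natPerm_apply_val (σ.extendDomain e) ⟨i, hin.trans_le h⟩
    rw [Perm.extendDomain_apply_subtype σ e (show i < n from hin)] at this
    exact this.trans (natPerm_apply_val σ ⟨i, hin⟩).symm
  · rw [natPerm_apply_of_le σ hni]
    rcases lt_or_ge i N with hiN | hNi
    · exact (natPerm_apply_val _ ⟨i, hiN⟩).trans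
        (congrArg Fin.val (Perm.extendDomain_apply_not_subtype σ e (not_lt.2 hni)))
    · exact natPerm_apply_of_le _ hNi

end NatPerm

section Alternation

variable {K : Type} [Field K]

noncomputable def permute (k : ℕ) (σ : Perm (Fin k)) : RF K →ₐ[K] RF K :=
  { ren K (natPerm k σ) (natPerm k σ).injective with commutes' := ren_cst _ }

theorem permute_apply (k : ℕ) (σ : Perm (Fin k)) (x : RF K) :
    permute k σ x = ren K (natPerm k σ) (natPerm k σ).injective x :=
  rfl

theorem permute_permute (k : ℕ) (σ τ : Perm (Fin k)) (x : RF K) :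
    permute k σ (permute k τ x) = permute k (σ * τ) x := by
  simp only [permute_apply, ren_ren]
  rw [ren_ext (g := natPerm k (σ * τ)) fun i => by simp [natPerm_mul]]

theorem permute_one (k : ℕ) (x : RF K) : permute k 1 x = x :=
  (permute_apply _ _ _).trans (ren_eq_self (by simp [natPerm_one]) x)

theorem permute_Z_val {k : ℕ} (σ : Perm (Fin k)) (i : Fin k) :
    permute k σ (Z K i) = Z K (σ i) := by
  rw [permute_apply, ren_Z, natPerm_apply_val]

theorem permute_Z_of_le {k : ℕ} (σ : Perm (Fin k)) {i : ℕ} (hi : k ≤ i) :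
    permute k σ (Z K i) = Z K i := by
  rw [permute_apply, ren_Z, natPerm_apply_of_le σ hi]

theorem permute_eq_of_natPerm_eq {n N : ℕ} {σ : Perm (Fin n)} {τ : Perm (Fin N)}
    (h : natPerm N τ = natPerm n σ) (x : RF K) : permute N τ x = permute n σ x := by
  simp only [permute_apply]
  rw [ren_ext fun i => by rw [h]]

theorem intCast_sign_mul_self {R : Type*} [Ring R] {k : ℕ} (σ : Perm (Fin k)) :
    ((Perm.sign σ : ℤ) : R) * ((Perm.sign σ : ℤ) : R) = 1 := by
  rw [← Int.cast_mul, ← Units.val_mul, Int.units_mul_self, Units.val_one, Int.cast_one]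

theorem Alt_eq (k : ℕ) (F : RF K) :
    Alt K k F = (k.factorial : RF K)⁻¹ *
      ∑ σ : Perm (Fin k), ((Perm.sign σ : ℤ) : RF K) * permute k σ F :=
  rfl

theorem Alt_add (k : ℕ) (F G : RF K) : Alt K k (F + G) = Alt K k F + Alt K k G := by
  simp only [Alt_eq, map_add, mul_add, Finset.sum_add_distrib]

theorem Alt_sum {ι : Type*} (k : ℕ) (s : Finset ι) (F : ι → RF K) :
    Alt K k (∑ i ∈ s, F i) = ∑ i ∈ s, Alt K k (F i) := by
  simp only [Alt_eq, map_sum, Finset.mul_sum]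
  rw [Finset.sum_comm]

theorem Alt_mul_of_forall_permute_eq (k : ℕ) {S : RF K} (hS : ∀ σ, permute k σ S = S)
    (F : RF K) : Alt K k (S * F) = S * Alt K k F := by
  simp only [Alt_eq, map_mul, hS, Finset.mul_sum]
  exact Finset.sum_congr rfl fun _ _ => by ring

theorem Alt_smul (k : ℕ) (c : K) (F : RF K) : Alt K k (c • F) = c • Alt K k F := by
  simp only [Algebra.smul_def]
  exact Alt_mul_of_forall_permute_eq k (fun σ => AlgHom.commutes _ c) F

theorem Alt_permute (k : ℕ) (σ : Perm (Fin k)) (F : RF K) :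
    Alt K k (permute k σ F) = ((Perm.sign σ : ℤ) : RF K) * Alt K k F := by
  simp only [Alt_eq, permute_permute, Finset.mul_sum]
  refine Fintype.sum_equiv (Equiv.mulRight σ) _ _ fun τ => ?_
  have hs := intCast_sign_mul_self (R := RF K) σ
  simp only [coe_mulRight, Perm.sign_mul, Units.val_mul, Int.cast_mul]
  linear_combination
    (-((k.factorial : RF K)⁻¹ * (Perm.sign τ : ℤ) * permute k (τ * σ) F)) * hs

variable [CharZero K]

theorem factorial_inv_mul_factorial (k : ℕ) : (k.factorial : RF K)⁻¹ * k.factorial = 1 :=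
  inv_mul_cancel₀ (Nat.cast_ne_zero.2 k.factorial_ne_zero)

theorem Alt_of_forall_permute_eq_sign_mul (k : ℕ) {F : RF K}
    (hF : ∀ σ, permute k σ F = ((Perm.sign σ : ℤ) : RF K) * F) : Alt K k F = F := by
  simp only [Alt_eq, hF, ← mul_assoc, intCast_sign_mul_self, one_mul, Finset.sum_const,
    Finset.card_univ, Fintype.card_perm, Fintype.card_fin, nsmul_eq_mul]
  rw [factorial_inv_mul_factorial, one_mul]

theorem Alt_zero_left (F : RF K) : Alt K 0 F = F :=
  Alt_of_forall_permute_eq_sign_mul 0 fun σ => by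
    rw [Subsingleton.elim σ 1, permute_one, map_one, Units.val_one, Int.cast_one, one_mul]

theorem Alt_Alt_mul {n N : ℕ} (h : n ≤ N) (A : RF K) {G : RF K}
    (hG : ∀ σ, permute n σ G = G) : Alt K N (Alt K n A * G) = Alt K N (A * G) := by
  have hterm : ∀ σ : Perm (Fin n), Alt K N (permute n σ (A * G))
      = ((Perm.sign σ : ℤ) : RF K) * Alt K N (A * G) := fun σ => by
    obtain ⟨τ, hτ, hsign⟩ := exists_natPerm_eq_of_le h σ
    rw [← permute_eq_of_natPerm_eq hτ, Alt_permute, hsign]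
  have hconst : ∀ σ : Perm (Fin n), ∀ τ : Perm (Fin N),
      permute N τ ((n.factorial : RF K)⁻¹ * ((Perm.sign σ : ℤ) : RF K))
        = (n.factorial : RF K)⁻¹ * ((Perm.sign σ : ℤ) : RF K) := fun _ _ => by
    rw [map_mul, map_inv₀, map_natCast, map_intCast]
  calc Alt K N (Alt K n A * G)
      = Alt K N (∑ σ : Perm (Fin n), ((n.factorial : RF K)⁻¹ * ((Perm.sign σ : ℤ) : RF K))
          * permute n σ (A * G)) := by
        rw [Alt_eq n, Finset.mul_sum, Finset.sum_mul]
        congr 1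
        exact Finset.sum_congr rfl fun σ _ => by rw [map_mul, hG]; ring
    _ = ∑ σ : Perm (Fin n), (n.factorial : RF K)⁻¹ *
          (((Perm.sign σ : ℤ) : RF K) * ((Perm.sign σ : ℤ) : RF K) * Alt K N (A * G)) := by
        rw [Alt_sum]
        refine Finset.sum_congr rfl fun σ _ => ?_
        rw [Alt_mul_of_forall_permute_eq N (hconst σ), hterm]
        ring
    _ = Alt K N (A * G) := by
        simp only [intCast_sign_mul_self, one_mul, Finset.sum_const, Finset.card_univ,
          Fintype.card_perm, Fintype.card_fin, nsmul_eq_mul]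
        rw [← mul_assoc, mul_comm _ (_)⁻¹, factorial_inv_mul_factorial, one_mul]

end Alternation

section IteratedShuffle

variable {K : Type} [Field K] (q₁ q₂ : K)

noncomputable def muProd (m : ℕ) : RF K :=
  ∏ j ∈ Finset.range m, ∏ i ∈ Finset.range j, mu K q₁ q₂ (Z K i) (Z K j)

variable (K) in
noncomputable def laurentMonomial {m : ℕ} (e : Fin m → ℤ) : RF K :=
  ∏ i : Fin m, Z K i ^ e i

theorem iterSh_append (l : List (RF K)) (f : RF K) :
    iterSh K q₁ q₂ (l ++ [f]) = shuffle K q₁ q₂ l.length 1 (iterSh K q₁ q₂ l) f := by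
  have hlen : ∀ (l : List (RF K)) (x : RF K) (k : ℕ),
      (l.foldl (fun acc f => (shuffle K q₁ q₂ acc.2 1 acc.1 f, acc.2 + 1)) (x, k)).2
        = k + l.length := by
    intro l
    induction l with
    | nil => simp
    | cons a l ih => intro x k; simp only [List.foldl_cons, ih, List.length_cons]; omega
  rw [iterSh, List.foldl_append, List.foldl_cons, List.foldl_nil, hlen, zero_add]
  rfl

theorem permute_prod_mu_last (m : ℕ) (σ : Perm (Fin m)) :
    permute m σ (∏ i : Fin m, mu K q₁ q₂ (Z K i) (Z K m))
      = ∏ i : Fin m, mu K q₁ q₂ (Z K i) (Z K m) := by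
  simp only [map_prod, permute_apply, ren_mu, natPerm_apply_val, natPerm_apply_of_le σ le_rfl]
  exact Equiv.prod_comp σ fun i => mu K q₁ q₂ (Z K i) (Z K m)

theorem iterSh_ofFn_zpow [CharZero K] (m : ℕ) (e : Fin m → ℤ) :
    iterSh K q₁ q₂ (List.ofFn fun i => Z K 0 ^ e i)
      = Alt K m (laurentMonomial K e * muProd q₁ q₂ m) := by
  induction m with
  | zero => simp [iterSh, laurentMonomial, muProd, Alt_zero_left]
  | succ m ih =>
    rw [List.ofFn_succ', List.concat_eq_append, iterSh_append, List.length_ofFn,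
      ih (fun i => e i.castSucc), shuffle]
    simp only [Fin.prod_univ_one, Fin.val_zero, add_zero, map_zpow₀, ren_Z, zero_add]
    rw [mul_assoc, Alt_Alt_mul (Nat.le_succ m) _ fun σ => by
      rw [map_mul, map_zpow₀, permute_Z_of_le σ le_rfl, permute_prod_mu_last]]
    congr 1
    rw [laurentMonomial, laurentMonomial, muProd, muProd, Fin.prod_univ_castSucc,
      Finset.prod_range_succ,
      ← Fin.prod_univ_eq_prod_range (fun i => mu K q₁ q₂ (Z K i) (Z K m))]
    simp only [Fin.val_castSucc, Fin.val_last]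
    ring

end IteratedShuffle

section Vandermonde

variable {K : Type} [Field K]

theorem prod_Iio_fin_eq_prod_range {M : Type*} [CommMonoid M] (n : ℕ) (g : ℕ → ℕ → M) :
    ∏ j : Fin n, ∏ i ∈ Finset.Iio j, g i j
      = ∏ j ∈ Finset.range n, ∏ i ∈ Finset.range j, g i j := by
  rw [← Fin.prod_univ_eq_prod_range (fun j => ∏ i ∈ Finset.range j, g i j)]
  refine Finset.prod_congr rfl fun j _ => ?_
  rw [← Nat.Iio_eq_range, ← Fin.map_valEmbedding_Iio, Finset.prod_map]
  rfl

theorem Z_injective : Function.Injective (Z K) :=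
  fun _ _ h => X_injective (IsFractionRing.injective (MvPolynomial ℕ K) (RF K) h)

theorem vand_eq_prod (n : ℕ) :
    vand K n = ∏ j : Fin n, ∏ i ∈ Finset.Iio j, (Z K i - Z K j) := by
  rw [prod_Iio_fin_eq_prod_range n (fun i j => Z K i - Z K j), vand]
  simp only [map_prod, map_sub, Z]

theorem vand_ne_zero (n : ℕ) : vand K n ≠ 0 := by
  rw [vand_eq_prod]
  exact Finset.prod_ne_zero_iff.2 fun j _ => Finset.prod_ne_zero_iff.2 fun i hi =>
    sub_ne_zero.2 fun h => (Finset.mem_Iio.1 hi).ne (Fin.val_injective (Z_injective h))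

theorem permute_vand (n : ℕ) (σ : Perm (Fin n)) :
    permute n σ (vand K n) = ((Perm.sign σ : ℤ) : RF K) * vand K n := by
  set u : RF K := ∏ j : Fin n, (-1) ^ (Finset.Iio j).card
  -- `Matrix.det_vandermonde` orders the factors the other way round
  have hdet : (Matrix.vandermonde fun i : Fin n => Z K i).det = u * vand K n := by
    rw [Matrix.det_vandermonde, vand_eq_prod, ← Finset.prod_mul_distrib,
      Finset.prod_comm' (t' := Finset.univ) (s' := fun j => Finset.Iio j)
        (by intro i j; simp [Finset.mem_Ioi, Finset.mem_Iio, and_comm])]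
    refine Finset.prod_congr rfl fun j _ => ?_
    rw [← Finset.prod_neg]
    simp only [neg_sub]
  have hpermute_det : permute n σ (Matrix.vandermonde fun i : Fin n => Z K i).det
      = ((Perm.sign σ : ℤ) : RF K) * (Matrix.vandermonde fun i : Fin n => Z K i).det := by
    rw [AlgHom.map_det, ← Matrix.det_permute]
    congr 1
    ext i j
    simp [Matrix.vandermonde, permute_Z_val]
  have hu : permute n σ u = u := by simp [u, map_prod]
  have hu0 : u ≠ 0 :=
    Finset.prod_ne_zero_iff.2 fun _ _ => pow_ne_zero _ (neg_ne_zero.2 one_ne_zero)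
  apply mul_left_cancel₀ hu0
  rw [← hu, ← map_mul, ← hdet, hpermute_det, hdet, hu]
  ring

theorem permute_vand_sq (n : ℕ) (σ : Perm (Fin n)) :
    permute n σ (vand K n ^ 2) = vand K n ^ 2 := by
  rw [map_pow, permute_vand, mul_pow, sq ((Perm.sign σ : ℤ) : RF K), intCast_sign_mul_self,
    one_mul]

variable (K) in
noncomputable def toRF (n : ℕ) : MvPolynomial (Fin n) K →ₐ[K] RF K :=
  aeval fun i => Z K i

theorem toRF_X {n : ℕ} (i : Fin n) : toRF K n (X i) = Z K i :=
  aeval_X _ _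

theorem toRF_rename {n : ℕ} (σ : Perm (Fin n)) (p : MvPolynomial (Fin n) K) :
    toRF K n (rename σ p) = permute n σ (toRF K n p) := by
  refine DFunLike.congr_fun (algHom_ext fun i => ?_ :
    (toRF K n).comp (rename σ) = (permute n σ).comp (toRF K n)) p
  simp [toRF_X, permute_Z_val]

theorem toRF_eq_algebraMap_rename {n : ℕ} (p : MvPolynomial (Fin n) K) :
    toRF K n p = algebraMap (MvPolynomial ℕ K) (RF K) (rename Fin.val p) := by
  refine DFunLike.congr_fun (algHom_ext fun i => ?_ : toRF K n =
    (IsScalarTower.toAlgHom K (MvPolynomial ℕ K) (RF K)).comp (rename Fin.val)) p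
  simp [toRF_X, Z]

theorem algebraMap_eq_cst (c : K) : algebraMap K (RF K) c = cst K c :=
  rfl

noncomputable def muNumerator (q₁ q₂ : K) (n : ℕ) : MvPolynomial (Fin n) K :=
  ∏ j, ∏ i ∈ Finset.Iio j, (X i - C q₁ * X j) * (X i - C q₂ * X j)

theorem muProd_eq (q₁ q₂ : K) (n : ℕ) :
    muProd q₁ q₂ n = toRF K n (muNumerator q₁ q₂ n) / vand K n ^ 2 := by
  rw [muProd, ← prod_Iio_fin_eq_prod_range n (fun i j => mu K q₁ q₂ (Z K i) (Z K j)),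
    vand_eq_prod, muNumerator, map_prod, ← Finset.prod_pow, ← Finset.prod_div_distrib]
  refine Finset.prod_congr rfl fun j _ => ?_
  rw [map_prod, ← Finset.prod_pow, ← Finset.prod_div_distrib]
  refine Finset.prod_congr rfl fun i _ => ?_
  simp [mu, toRF_X, algebraMap_eq_cst]

end Vandermonde

section Genericity

variable {K : Type} [Field K] {q₁ q₂ : K}

variable (q₁ q₂) in
def IsQShift (x y : K) : Prop :=
  ∃ a b : ℕ, (a, b) ≠ (0, 0) ∧ x = q₁ ^ a * q₂ ^ b * y

theorem IsQShift.trans {x y z : K} (hxy : IsQShift q₁ q₂ x y) (hyz : IsQShift q₁ q₂ y z) :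
    IsQShift q₁ q₂ x z := by
  obtain ⟨a, b, hab, rfl⟩ := hxy
  obtain ⟨a', b', hab', rfl⟩ := hyz
  refine ⟨a + a', b + b', fun h => hab' ?_, by ring⟩
  simp only [Prod.mk.injEq] at h ⊢
  omega

theorem IsQShift.irrefl (hgen : ∀ a b : ℕ, (a, b) ≠ (0, 0) → q₁ ^ a * q₂ ^ b ≠ 1)
    {x : K} (hx : x ≠ 0) : ¬ IsQShift q₁ q₂ x x := by
  rintro ⟨a, b, hab, h⟩
  exact hgen a b hab (mul_right_cancel₀ hx (by rw [one_mul, ← h]))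

/-- Under genericity, `IsQShift` is a strict order on nonzero values; sorting by the number of
values lying strictly below gives a linear extension. -/
theorem exists_perm_forall_lt_not_isQShift
    (hgen : ∀ a b : ℕ, (a, b) ≠ (0, 0) → q₁ ^ a * q₂ ^ b ≠ 1)
    {n : ℕ} (v : Fin n → K) (hv : ∀ i, v i ≠ 0) :
    ∃ σ : Perm (Fin n), ∀ i j, i < j → ¬ IsQShift q₁ q₂ (v (σ i)) (v (σ j)) := by
  classical
  let below : Fin n → ℕ := fun a =>
    (Finset.univ.filter fun b => IsQShift q₁ q₂ (v a) (v b)).card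
  have hbelow : ∀ a b, IsQShift q₁ q₂ (v a) (v b) → below b < below a := by
    intro a b hab
    refine Finset.card_lt_card ((Finset.ssubset_iff_of_subset fun c hc => ?_).2 ⟨b, ?_, ?_⟩)
    · simp only [Finset.mem_filter, Finset.mem_univ, true_and] at hc ⊢
      exact hab.trans hc
    · simpa using hab
    · simpa using IsQShift.irrefl hgen (hv b)
  exact ⟨Tuple.sort below, fun i j hij hshift =>
    (hbelow _ _ hshift).not_ge (Tuple.monotone_sort below hij.le)⟩

theorem exists_eval_rename_muNumerator_ne_zero
    (hgen : ∀ a b : ℕ, (a, b) ≠ (0, 0) → q₁ ^ a * q₂ ^ b ≠ 1)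
    {n : ℕ} (ξ : Fin n → K) (hξ : ∀ i, ξ i ≠ 0) :
    ∃ σ : Perm (Fin n), eval ξ (rename σ (muNumerator q₁ q₂ n)) ≠ 0 := by
  obtain ⟨σ, hσ⟩ := exists_perm_forall_lt_not_isQShift hgen ξ hξ
  refine ⟨σ, ?_⟩
  simp only [eval_rename, muNumerator, map_prod, map_mul, map_sub, eval_X, eval_C,
    Function.comp_apply]
  refine Finset.prod_ne_zero_iff.2 fun j _ => Finset.prod_ne_zero_iff.2 fun i hi => ?_
  have hij := hσ i j (Finset.mem_Iio.1 hi)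
  refine mul_ne_zero (sub_ne_zero.2 fun h => hij ⟨1, 0, by simp, by simp [h]⟩)
    (sub_ne_zero.2 fun h => hij ⟨0, 1, by simp, by simp [h]⟩)

/-- Hilbert's Nullstellensatz: the permuted copies of `muNumerator` have no common zero on the
torus, so they generate the unit ideal of the Laurent polynomial ring. -/
theorem exists_prod_X_pow_eq_sum_rename_muNumerator [IsAlgClosed K]
    (hgen : ∀ a b : ℕ, (a, b) ≠ (0, 0) → q₁ ^ a * q₂ ^ b ≠ 1) (n : ℕ) :
    ∃ (N : ℕ) (c : Perm (Fin n) → MvPolynomial (Fin n) K),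
      (∏ i, X i) ^ N = ∑ σ, c σ * rename σ (muNumerator q₁ q₂ n) := by
  let I : Ideal (MvPolynomial (Fin n) K) :=
    Ideal.span (Set.range fun σ : Perm (Fin n) => rename σ (muNumerator q₁ q₂ n))
  have hmem : ∏ i, X i ∈ vanishingIdeal K (zeroLocus K I) := by
    refine mem_vanishingIdeal_iff.2 fun ξ hξ => ?_
    change eval ξ _ = 0
    by_contra hne
    have hξ0 : ∀ i, ξ i ≠ 0 := fun i hi =>
      hne (by rw [map_prod]; exact Finset.prod_eq_zero (Finset.mem_univ i) (by rw [eval_X, hi]))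
    obtain ⟨σ, hσ⟩ := exists_eval_rename_muNumerator_ne_zero hgen ξ hξ0
    exact hσ (mem_zeroLocus_iff.1 hξ _ (Ideal.subset_span ⟨σ, rfl⟩))
  rw [vanishingIdeal_zeroLocus_eq_radical] at hmem
  obtain ⟨N, hN⟩ := hmem
  obtain ⟨c, hc⟩ := Ideal.mem_span_range_iff_exists_fun.1 hN
  exact ⟨N, c, hc.symm⟩

end Genericity

section LaurentSubalgebra

variable {K : Type} [Field K]

variable (K) in
noncomputable def laurentSubalgebra (n : ℕ) : Subalgebra K (RF K) :=
  Algebra.adjoin K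
    (Set.range (fun i : Fin n => Z K i) ∪ Set.range (fun i : Fin n => (Z K i)⁻¹))

theorem Z_mem_laurentSubalgebra {n : ℕ} (i : Fin n) : Z K i ∈ laurentSubalgebra K n :=
  Algebra.subset_adjoin (Or.inl ⟨i, rfl⟩)

theorem Z_inv_mem_laurentSubalgebra {n : ℕ} (i : Fin n) :
    (Z K i)⁻¹ ∈ laurentSubalgebra K n :=
  Algebra.subset_adjoin (Or.inr ⟨i, rfl⟩)

theorem toRF_mem_laurentSubalgebra {n : ℕ} (p : MvPolynomial (Fin n) K) :
    toRF K n p ∈ laurentSubalgebra K n := by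
  have hp : toRF K n p ∈ (toRF K n).range := ⟨p, rfl⟩
  rw [toRF, aeval_range] at hp
  exact Algebra.adjoin_mono Set.subset_union_left hp

theorem permute_mem_laurentSubalgebra {n : ℕ} (σ : Perm (Fin n)) {x : RF K}
    (hx : x ∈ laurentSubalgebra K n) : permute n σ x ∈ laurentSubalgebra K n := by
  have hσx : permute n σ x ∈ (laurentSubalgebra K n).map (permute n σ) := ⟨x, hx, rfl⟩
  rw [laurentSubalgebra, AlgHom.map_adjoin] at hσx
  refine Algebra.adjoin_mono ?_ hσx
  rintro _ ⟨y, ⟨i, rfl⟩ | ⟨i, rfl⟩, rfl⟩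
  · exact Or.inl ⟨σ i, (permute_Z_val σ i).symm⟩
  · exact Or.inr ⟨σ i, by rw [map_inv₀, permute_Z_val]⟩

theorem laurentMonomial_add {n : ℕ} (e e' : Fin n → ℤ) :
    laurentMonomial K (e + e') = laurentMonomial K e * laurentMonomial K e' := by
  simp only [laurentMonomial, ← Finset.prod_mul_distrib, Pi.add_apply]
  exact Finset.prod_congr rfl fun i _ => zpow_add₀ (Z_ne_zero _) _ _

theorem laurentMonomial_single {n : ℕ} (i : Fin n) (k : ℤ) :
    laurentMonomial K (Pi.single i k) = Z K i ^ k := by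
  rw [laurentMonomial, Fintype.prod_eq_single i fun j hj => by simp [hj], Pi.single_eq_same]

theorem laurentSubalgebra_le_span_laurentMonomial (n : ℕ) :
    Subalgebra.toSubmodule (laurentSubalgebra K n)
      ≤ Submodule.span K (Set.range (laurentMonomial K (m := n))) := by
  rw [laurentSubalgebra, Algebra.adjoin_eq_span]
  refine Submodule.span_mono fun x hx => ?_
  induction hx using Submonoid.closure_induction with
  | mem x hx =>
    rcases hx with ⟨i, rfl⟩ | ⟨i, rfl⟩
    · exact ⟨Pi.single i 1, by rw [laurentMonomial_single, zpow_one]⟩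
    · exact ⟨Pi.single i (-1), by rw [laurentMonomial_single, zpow_neg_one]⟩
  | one => exact ⟨0, by simp [laurentMonomial]⟩
  | mul x y _ _ hx hy =>
    obtain ⟨e, rfl⟩ := hx
    obtain ⟨e', rfl⟩ := hy
    exact ⟨e + e', laurentMonomial_add e e'⟩

theorem inv_prod_Z_pow_mem_laurentSubalgebra (n N : ℕ) :
    ((∏ i : Fin n, Z K i) ^ N)⁻¹ ∈ laurentSubalgebra K n := by
  rw [← inv_pow, ← Finset.prod_inv_distrib]
  exact pow_mem (prod_mem fun i _ => Z_inv_mem_laurentSubalgebra i) N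

theorem vand_mem_laurentSubalgebra (n : ℕ) : vand K n ∈ laurentSubalgebra K n := by
  rw [vand_eq_prod]
  exact prod_mem fun j _ => prod_mem fun i _ =>
    sub_mem (Z_mem_laurentSubalgebra i) (Z_mem_laurentSubalgebra j)

theorem IsSymLaurent.mem_laurentSubalgebra {n : ℕ} {f : RF K} (hf : IsSymLaurent K n f) :
    f ∈ laurentSubalgebra K n := by
  obtain ⟨⟨p, N, hvars, hfp⟩, -⟩ := hf
  obtain ⟨p', rfl⟩ := exists_rename_eq_of_vars_subset_range p Fin.val Fin.val_injective
    fun i hi => ⟨⟨i, hvars hi⟩, rfl⟩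
  have hprod : algebraMap (MvPolynomial ℕ K) (RF K) ((∏ i ∈ Finset.range n, X i) ^ N)
      = (∏ i : Fin n, Z K i) ^ N := by
    rw [map_pow, map_prod, ← Fin.prod_univ_eq_prod_range]
    rfl
  rw [hprod, ← toRF_eq_algebraMap_rename] at hfp
  rw [eq_div_of_mul_eq (pow_ne_zero N (Finset.prod_ne_zero_iff.2 fun i _ => Z_ne_zero _)) hfp,
    div_eq_mul_inv]
  exact mul_mem (toRF_mem_laurentSubalgebra p') (inv_prod_Z_pow_mem_laurentSubalgebra n N)

end LaurentSubalgebra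

section GeneratedInDegreeOne

variable {K : Type} [Field K] (q₁ q₂ : K)

noncomputable def iterShSpan (n : ℕ) : Submodule K (RF K) :=
  Submodule.span K (iterSh K q₁ q₂ '' {l | l.length = n ∧ ∀ f ∈ l, IsSymLaurent K 1 f})

theorem isSymLaurent_one_Z_zero_zpow (e : ℤ) : IsSymLaurent K 1 (Z K 0 ^ e) := by
  refine ⟨⟨X 0 ^ (e + e.natAbs).toNat, e.natAbs, ?_, ?_⟩, fun σ => ?_⟩
  · refine (Finset.coe_subset.2 (vars_pow _ _)).trans ?_
    simp [vars_X]
  · rw [Finset.prod_range_one, map_pow, map_pow]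
    change Z K 0 ^ e * Z K 0 ^ e.natAbs = Z K 0 ^ (e + e.natAbs).toNat
    rw [← zpow_natCast, ← zpow_natCast, ← zpow_add₀ (Z_ne_zero 0),
      Int.toNat_of_nonneg (by omega)]
  · rw [Subsingleton.elim σ 1]
    exact permute_one 1 _

variable {q₁ q₂}

theorem exists_prod_Z_pow_div_vand_sq_eq_sum [IsAlgClosed K]
    (hgen : ∀ a b : ℕ, (a, b) ≠ (0, 0) → q₁ ^ a * q₂ ^ b ≠ 1) (n : ℕ) :
    ∃ (N : ℕ) (c : Perm (Fin n) → RF K), (∀ σ, c σ ∈ laurentSubalgebra K n) ∧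
      (∏ i : Fin n, Z K i) ^ N / vand K n ^ 2
        = ∑ σ, c σ * permute n σ (muProd q₁ q₂ n) := by
  obtain ⟨N, c, hc⟩ := exists_prod_X_pow_eq_sum_rename_muNumerator hgen n
  refine ⟨N, fun σ => toRF K n (c σ), fun σ => toRF_mem_laurentSubalgebra _, ?_⟩
  have h := congrArg (toRF K n) hc
  simp only [map_pow, map_prod, map_sum, map_mul, toRF_X, toRF_rename] at h
  simp only [h, Finset.sum_div, muProd_eq, map_div₀, permute_vand_sq, mul_div_assoc]

variable [CharZero K]

theorem Alt_mul_muProd_mem_iterShSpan {n : ℕ} {P : RF K} (hP : P ∈ laurentSubalgebra K n) :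
    Alt K n (P * muProd q₁ q₂ n) ∈ iterShSpan q₁ q₂ n := by
  have hP' := laurentSubalgebra_le_span_laurentMonomial n hP
  clear hP
  induction hP' using Submodule.span_induction with
  | mem x hx =>
    obtain ⟨e, rfl⟩ := hx
    rw [← iterSh_ofFn_zpow]
    refine Submodule.subset_span ⟨_, ⟨List.length_ofFn, fun f hf => ?_⟩, rfl⟩
    obtain ⟨i, rfl⟩ := List.mem_ofFn.1 hf
    exact isSymLaurent_one_Z_zero_zpow (e i)
  | zero => simp [Alt_eq]
  | add x y _ _ hx hy => rw [add_mul, Alt_add]; exact add_mem hx hy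
  | smul c x _ hx => rw [smul_mul_assoc, Alt_smul]; exact Submodule.smul_mem _ c hx

theorem Alt_mul_permute_muProd_mem_iterShSpan {n : ℕ} {P : RF K}
    (hP : P ∈ laurentSubalgebra K n) (σ : Perm (Fin n)) :
    Alt K n (P * permute n σ (muProd q₁ q₂ n)) ∈ iterShSpan q₁ q₂ n := by
  have hP' : P = permute n σ (permute n σ⁻¹ P) := by
    rw [permute_permute, mul_inv_cancel, permute_one]
  rw [hP', ← map_mul, Alt_permute, ← zsmul_eq_mul]
  exact zsmul_mem (Alt_mul_muProd_mem_iterShSpan (permute_mem_laurentSubalgebra σ⁻¹ hP)) _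

theorem Alt_div_vand_sq_mem_iterShSpan [IsAlgClosed K]
    (hgen : ∀ a b : ℕ, (a, b) ≠ (0, 0) → q₁ ^ a * q₂ ^ b ≠ 1) {n : ℕ} {P : RF K}
    (hP : P ∈ laurentSubalgebra K n) : Alt K n (P / vand K n ^ 2) ∈ iterShSpan q₁ q₂ n := by
  obtain ⟨N, c, hc, hsum⟩ := exists_prod_Z_pow_div_vand_sq_eq_sum hgen n
  have hZ : (∏ i : Fin n, Z K i) ^ N ≠ 0 :=
    pow_ne_zero N (Finset.prod_ne_zero_iff.2 fun i _ => Z_ne_zero _)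
  have hP' : P / vand K n ^ 2 = ∑ σ, P * ((∏ i : Fin n, Z K i) ^ N)⁻¹ * c σ *
      permute n σ (muProd q₁ q₂ n) := by
    simp only [mul_assoc, ← Finset.mul_sum, ← hsum]
    field_simp
  rw [hP', Alt_sum]
  exact Submodule.sum_mem _ fun σ _ => Alt_mul_permute_muProd_mem_iterShSpan
    (mul_mem (mul_mem hP (inv_prod_Z_pow_mem_laurentSubalgebra n N)) (hc σ)) σ

theorem Sgr_subset_iterShSpan [IsAlgClosed K]
    (hgen : ∀ a b : ℕ, (a, b) ≠ (0, 0) → q₁ ^ a * q₂ ^ b ≠ 1) (n : ℕ) :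
    Sgr K n ⊆ iterShSpan q₁ q₂ n := by
  rintro _ ⟨f, hf, rfl⟩
  have hΔ := vand_ne_zero (K := K) n
  have hantisymm : ∀ σ, permute n σ (f * vand K n / vand K n ^ 2)
      = ((Perm.sign σ : ℤ) : RF K) * (f * vand K n / vand K n ^ 2) := fun σ => by
    rw [map_div₀, map_mul, permute_vand, permute_vand_sq, show permute n σ f = f from hf.2 σ]
    ring
  have hF : f / vand K n = Alt K n (f * vand K n / vand K n ^ 2) := by
    rw [Alt_of_forall_permute_eq_sign_mul n hantisymm]
    field_simp
  rw [hF]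
  exact Alt_div_vand_sq_mem_iterShSpan hgen (mul_mem hf.mem_laurentSubalgebra
    (vand_mem_laurentSubalgebra n))

end GeneratedInDegreeOne

theorem generated_in_degree_one_general (q₁ q₂ : ℂ)
    (hgen : ∀ a b : ℕ, (a, b) ≠ (0, 0) → q₁ ^ a * q₂ ^ b ≠ 1)
    (n : ℕ) (F : RF ℂ) (hF : F ∈ Sgr ℂ n) :
    ∃ (t : Finset (List (RF ℂ))) (c : List (RF ℂ) → ℂ),
      (∀ l ∈ t, l.length = n ∧ ∀ f ∈ l, IsSymLaurent ℂ 1 f) ∧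
      F = ∑ l ∈ t, cst ℂ (c l) * iterSh ℂ q₁ q₂ l := by
  obtain ⟨c, hc, hcF⟩ :=
    (Finsupp.mem_span_image_iff_linearCombination ℂ).1 (Sgr_subset_iterShSpan hgen n hF)
  refine ⟨c.support, c, fun l hl => hc hl, ?_⟩
  rw [← hcF, Finsupp.linearCombination_apply, Finsupp.sum]
  exact Finset.sum_congr rfl fun l _ => Algebra.smul_def _ _

/-- for generic `q₁, q₂ ∈ ℂ*`, the shuffle algebra is generated in degree
one: every element of `S_n` is a `ℂ`-linear combination of iterated shuffle products of
one-variable Laurent polynomials. -/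
theorem generated_in_degree_one (q₁ q₂ : ℂ) (hq₁ : q₁ ≠ 0) (hq₂ : q₂ ≠ 0)
    (hgen : ∀ a b : ℕ, (a, b) ≠ (0, 0) → q₁ ^ a * q₂ ^ b ≠ 1)
    (n : ℕ) (hn : 1 ≤ n) (F : RF ℂ) (hF : F ∈ Sgr ℂ n) :
    ∃ (t : Finset (List (RF ℂ))) (c : List (RF ℂ) → ℂ),
      (∀ l ∈ t, l.length = n ∧ ∀ f ∈ l, IsSymLaurent ℂ 1 f) ∧
      F = ∑ l ∈ t, cst ℂ (c l) * iterSh ℂ q₁ q₂ l :=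
  generated_in_degree_one_general q₁ q₂ hgen n F hF
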